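/- arXiv:math/0702592 — 2 statements merged into one kernel-verified Lean document; each statement's English description precedes it below -/
import Mathlib

section
/- A sequence (σ₁^{e_p}, ..., σ₁^{e_1}) of powers of σ₁ is the 3-splitting of some positive 3-strand braid if and only if e_p ≥ 1, e_r ≥ 2 for p > r ≥ 3, and e₂ ≥ 1 whenever p ≥ 3. -/
/-- The braid relations on the free monoid over `Fin N`
(generator `i : Fin N` stands for `σ_{i+1}`). -/
def braidRel (N : ℕ) : FreeMonoid (Fin N) → FreeMonoid (Fin N) → Prop := fun a b =>
  (∃ i j : Fin N, ((i : ℕ) + 2 ≤ (j : ℕ) ∨ (j : ℕ) + 2 ≤ (i : ℕ)) ∧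
      a = FreeMonoid.of i * FreeMonoid.of j ∧ b = FreeMonoid.of j * FreeMonoid.of i) ∨
  (∃ i j : Fin N, ((i : ℕ) + 1 = (j : ℕ) ∨ (j : ℕ) + 1 = (i : ℕ)) ∧
      a = FreeMonoid.of i * FreeMonoid.of j * FreeMonoid.of i ∧
      b = FreeMonoid.of j * FreeMonoid.of i * FreeMonoid.of j)

def braidCon (N : ℕ) : Con (FreeMonoid (Fin N)) := conGen (braidRel N)

/-- The positive braid monoid on `N+1` strands `B_{N+1}⁺`,
with generators `σ_1, …, σ_N` indexed by `Fin N`. -/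
abbrev PosBraid (N : ℕ) := (braidCon N).Quotient

/-- The generator `σ_{i+1}` of the positive braid monoid. -/
def sigma {N : ℕ} (i : Fin N) : PosBraid N := (braidCon N).mk' (FreeMonoid.of i)

/-- The flip automorphism `Φ_{N+1} : σ_i ↦ σ_{N+1-i}`. -/
def flipH (N : ℕ) : PosBraid N →* PosBraid N :=
  Con.lift _ ((braidCon N).mk'.comp (FreeMonoid.map Fin.rev)) <| by
    apply Con.conGen_le.mpr
    rintro a b (⟨i, j, hij, rfl, rfl⟩ | ⟨i, j, hij, rfl, rfl⟩) <;>
      simp only [Con.ker_rel, MonoidHom.comp_apply, map_mul, FreeMonoid.map_of] <;>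
      refine (Con.eq _).mpr (ConGen.Rel.of _ _ ?_)
    · exact Or.inl ⟨Fin.rev i, Fin.rev j, by
        simp only [Fin.val_rev]; omega, rfl, rfl⟩
    · exact Or.inr ⟨Fin.rev i, Fin.rev j, by
        simp only [Fin.val_rev]; omega, rfl, rfl⟩

/-- The inclusion `B_{N+1}⁺ → B_{N+2}⁺`. -/
def incl (N : ℕ) : PosBraid N →* PosBraid (N + 1) :=
  Con.lift _ ((braidCon (N + 1)).mk'.comp (FreeMonoid.map Fin.castSucc)) <| by
    apply Con.conGen_le.mpr
    rintro a b (⟨i, j, hij, rfl, rfl⟩ | ⟨i, j, hij, rfl, rfl⟩) <;>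
      simp only [Con.ker_rel, MonoidHom.comp_apply, map_mul, FreeMonoid.map_of] <;>
      refine (Con.eq _).mpr (ConGen.Rel.of _ _ ?_)
    · exact Or.inl ⟨i.castSucc, j.castSucc, by simpa using hij, rfl, rfl⟩
    · exact Or.inr ⟨i.castSucc, j.castSucc, by simpa using hij, rfl, rfl⟩

/-- Product `f^{p-1}(x_p) ⋯ f(x_2) · x_1` of the list `[x_p, …, x_1]`,
where each entry is twisted by an iterate of `f`. -/
def prodFlip {M : Type*} [Monoid M] (f : M → M) : List M → M
  | [] => 1
  | a :: t => f^[t.length] a * prodFlip f t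

/-- `l = [x_p, …, x_1]` (a list of elements of `B_{k+1}⁺`) is the `(k+2)`-splitting of
`x ∈ B_{k+2}⁺` : `x = Φ^{p-1}(x_p) ⋯ Φ(x_2)·x_1`, the leading entry is non-trivial, and
for every `r ≥ 2` the only generator `σ_i` right-dividing `Φ^{p-r}(x_p) ⋯ Φ(x_{r+1})·x_r`
is `σ_1`. -/
def IsSplit {k : ℕ} (x : PosBraid (k + 1)) (l : List (PosBraid k)) : Prop :=
  x = prodFlip (⇑(flipH (k + 1))) (l.map (incl k)) ∧
  l.head? ≠ some 1 ∧
  ∀ j, 1 ≤ j → j < l.length →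
    (∃ z, prodFlip (⇑(flipH (k + 1))) ((l.take j).map (incl k)) =
        z * sigma (⟨0, Nat.succ_pos k⟩ : Fin (k + 1))) ∧
    ∀ i : Fin (k + 1),
      (∃ z, prodFlip (⇑(flipH (k + 1))) ((l.take j).map (incl k)) = z * sigma i) →
      i = (⟨0, Nat.succ_pos k⟩ : Fin (k + 1))

/-- `σ_{i+1}` as an element of `B_{N+1}⁺`, extended by `1` for out-of-range indices. -/
def sigmaP (N : ℕ) (i : ℕ) : PosBraid N := if h : i < N then sigma ⟨i, h⟩ else 1

/-- `δ_{N+1} = σ_N σ_{N-1} ⋯ σ_1` in `B_{N+1}⁺`. -/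
def deltaFull (N : ℕ) : PosBraid N := ((List.ofFn (sigma (N := N))).reverse).prod

/-- `Δ_m` (the Garside element of `B_m⁺`), viewed inside `B_{N+1}⁺`,
via `Δ_1 = 1` and `Δ_{m+1} = σ_1 ⋯ σ_m · Δ_m`. -/
def DeltaP (N : ℕ) : ℕ → PosBraid N
  | 0 => 1
  | m + 1 => ((List.range m).map (sigmaP N)).prod * DeltaP N m

/-- `\widehatΔ_{N+1,d} = Φ^d(δ_{N+1}) ⋯ Φ²(δ_{N+1}) · Φ(δ_{N+1})` (`d` factors). -/
def hatDelta (N : ℕ) (d : ℕ) : PosBraid N :=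
  ((List.range d).map (fun j => (⇑(flipH N))^[d - j] (deltaFull N))).prod

/-- ShortLex extension of a relation: compare lists first by length,
then lexicographically (from the left). -/
def SL {α : Type*} (r : α → α → Prop) (s t : List α) : Prop :=
  s.length < t.length ∨ (s.length = t.length ∧ List.Lex r s t)

/-- The ordering `<⁺` of `B_{k+1}⁺`, defined recursively: on `B_2⁺` it is the comparison
of exponents of `σ_1`; on `B_{k+2}⁺` it is the ShortLex comparison of `(k+2)`-splittings,
entries being compared by `<⁺` on `B_{k+1}⁺`. -/
def ordP : (k : ℕ) → PosBraid k → PosBraid k → Prop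
  | 0 => fun _ _ => False
  | 1 => fun x y => ∃ p q : ℕ, x = sigma (0 : Fin 1) ^ p ∧ y = sigma (0 : Fin 1) ^ q ∧ p < q
  | (k + 2) => fun x y => ∃ lx ly : List (PosBraid (k + 1)),
      IsSplit x lx ∧ IsSplit y ly ∧ SL (ordP (k + 1)) lx ly

/-!
Write `Pⱼ = Φ^{j-1}(σ₁^{e_p}) ⋯ Φ(σ₁^{e_{p-j+2}}) σ₁^{e_{p-j+1}}`, so that `Pⱼ₊₁ = Φ(Pⱼ) σ₁^{e_{p-j}}`
and the splitting conditions say that `σ₁` is the only generator right-dividing `Pⱼ` for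
`1 ≤ j < p`. If `Pⱼ = zσ₁`, an exponent `0` gives `Pⱼ₊₁ = Φ(z)σ₂`, and an exponent `1` gives
`Pⱼ₊₂ = Φ²(z)σ₁σ₂σ₁^b = Φ²(z)σ₂^bσ₁σ₂`; both are excluded. Conversely, under the bounds `Pⱼ` is
spelled by a word `σ_c^{e_p} ⋯ σ₂^{e_{p-j+2}} σ₁^{e_{p-j+1}}` whose inner blocks have length at
least `2`. Such a word has no factor `σᵢσⱼσᵢ`, so no braid relation applies to it: it is the only
word representing `Pⱼ`, and its last letter `σ₁` is the only right divisor among the generators.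
-/

section Rigid

variable {M : Type*} [Monoid M]

def IsRigid (r : M → M → Prop) (w : M) : Prop :=
  ∀ u a b v, r a b ∨ r b a → w ≠ u * a * v

theorem IsRigid.of_mul_left {r : M → M → Prop} {x y : M} (h : IsRigid r (x * y)) :
    IsRigid r x :=
  fun u a b v hab he => h u a b (v * y) hab (by rw [he]; simp only [mul_assoc])

theorem IsRigid.of_mul_right {r : M → M → Prop} {x y : M} (h : IsRigid r (x * y)) :
    IsRigid r y :=
  fun u a b v hab he => h (x * u) a b v hab (by rw [he]; simp only [mul_assoc])

theorem eq_of_conGen_of_isRigid {r : M → M → Prop} {w w' : M} (h : conGen r w w')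
    (hw : IsRigid r w ∨ IsRigid r w') : w = w' := by
  induction h with
  | of x y hxy =>
    rcases hw with hw | hw
    · exact absurd (by simp) (hw 1 x y 1 (.inl hxy))
    · exact absurd (by simp) (hw 1 y x 1 (.inr hxy))
  | refl => rfl
  | symm _ ih => exact (ih hw.symm).symm
  | trans _ _ ih₁ ih₂ =>
    rcases hw with hw | hw
    · obtain rfl := ih₁ (.inl hw); exact ih₂ (.inl hw)
    · obtain rfl := ih₂ (.inr hw); exact ih₁ (.inr hw)
  | mul _ _ ih₁ ih₂ =>
    rcases hw with hw | hw
    · rw [ih₁ (.inl hw.of_mul_left), ih₂ (.inl hw.of_mul_right)]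
    · rw [ih₁ (.inr hw.of_mul_left), ih₂ (.inr hw.of_mul_right)]

end Rigid

theorem sigma_pow {N : ℕ} (i : Fin N) (e : ℕ) :
    sigma i ^ e = (braidCon N).mk' (FreeMonoid.ofList (List.replicate e i)) := by
  induction e with
  | zero => rfl
  | succ e ih =>
    rw [pow_succ, ih, List.replicate_succ', FreeMonoid.ofList_append, map_mul]
    rfl

theorem flipH_sigma {N : ℕ} (i : Fin N) : flipH N (sigma i) = sigma i.rev := rfl

theorem iterate_flipH_sigma {N : ℕ} (n : ℕ) (i : Fin N) :
    (flipH N)^[n] (sigma i) = sigma (Fin.rev^[n] i) := by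
  induction n with
  | zero => rfl
  | succ n ih => rw [Function.iterate_succ_apply', ih, flipH_sigma, Function.iterate_succ_apply']

theorem incl_sigma {N : ℕ} (i : Fin N) : incl N (sigma i) = sigma i.castSucc := rfl

theorem prodFlip_append_singleton {M : Type*} [Monoid M] (f : M →* M) (l : List M) (a : M) :
    prodFlip f (l ++ [a]) = f (prodFlip f l) * a := by
  induction l with
  | nil => simp [prodFlip]
  | cons b l ih =>
    rw [List.cons_append, prodFlip, prodFlip, ih, map_mul, List.length_append,
      List.length_singleton, Function.iterate_succ_apply', mul_assoc]

def rightDescents {N : ℕ} (y : PosBraid N) : Set (Fin N) := {i | ∃ z, y = z * sigma i}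

theorem sigma_pow_eq_one_iff {e : ℕ} : sigma (0 : Fin 1) ^ e = 1 ↔ e = 0 := by
  refine ⟨fun h => ?_, by rintro rfl; rfl⟩
  have hrigid : IsRigid (braidRel 1) (FreeMonoid.ofList (List.replicate e 0)) := by
    rintro u a b v ((⟨i, j, hij, -⟩ | ⟨i, j, hij, -⟩) | (⟨i, j, hij, -⟩ | ⟨i, j, hij, -⟩)) <;>
      omega
  rw [sigma_pow] at h
  have := congrArg FreeMonoid.toList
    (eq_of_conGen_of_isRigid ((Con.eq _).1 h) (.inl hrigid))
  simpa using this

def NoAlternatingTriple (w : List (Fin 2)) : Prop := ∀ i j : Fin 2, i ≠ j → ¬ [i, j, i] <:+: w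

namespace NoAlternatingTriple

theorem cons {w : List (Fin 2)} {x : Fin 2} (hw : NoAlternatingTriple w)
    (hx : ∀ y, [y, x] <+: w → y = x) : NoAlternatingTriple (x :: w) := by
  intro i j hij h
  rcases List.infix_cons_iff.1 h with h | h
  · obtain ⟨rfl, hji⟩ := List.cons_prefix_cons.1 h
    exact hij (hx j hji).symm
  · exact hw i j hij h

theorem replicate_append {w : List (Fin 2)} {x : Fin 2} (e : ℕ) (hw : NoAlternatingTriple w)
    (hx : ∀ y, [y, x] <+: w → y = x) : NoAlternatingTriple (List.replicate e x ++ w) := by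
  induction e with
  | zero => exact hw
  | succ e ih =>
    refine ih.cons fun y hy => ?_
    cases e with
    | zero => exact hx y hy
    | succ e => exact (List.cons_prefix_cons.1 hy).1

theorem isRigid {w : List (Fin 2)} (hw : NoAlternatingTriple w) :
    IsRigid (braidRel 2) (FreeMonoid.ofList w) := by
  have key : ∀ i j : Fin 2, i ≠ j → ∀ u v : FreeMonoid (Fin 2),
      FreeMonoid.ofList w ≠ u * (.of i * .of j * .of i) * v := by
    intro i j hij u v he
    refine hw i j hij ⟨u.toList, v.toList, ?_⟩
    simpa using congrArg FreeMonoid.toList he.symm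
  rintro u a b v ((⟨i, j, hij, rfl, rfl⟩ | ⟨i, j, hij, rfl, rfl⟩) |
    (⟨i, j, hij, rfl, rfl⟩ | ⟨i, j, hij, rfl, rfl⟩))
  · omega
  · exact key i j (by rintro rfl; omega) u v
  · omega
  · exact key j i (by rintro rfl; omega) u v

end NoAlternatingTriple

theorem rightDescents_mk_eq_singleton {w : List (Fin 2)} {i : Fin 2}
    (hw : NoAlternatingTriple w) (hlast : w.getLast? = some i) :
    rightDescents ((braidCon 2).mk' (FreeMonoid.ofList w)) = {i} := by
  ext k
  constructor
  · rintro ⟨z, hz⟩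
    obtain ⟨u, rfl⟩ := Con.mk'_surjective z
    have hw' := eq_of_conGen_of_isRigid ((Con.eq _).1 hz) (.inl hw.isRigid)
    have := congrArg FreeMonoid.toList hw'
    rw [FreeMonoid.toList_mul, FreeMonoid.toList_ofList, FreeMonoid.toList_of] at this
    simpa [this] using hlast
  · rintro rfl
    obtain ⟨w', rfl⟩ := List.getLast?_eq_some_iff.1 hlast
    exact ⟨(braidCon 2).mk' (FreeMonoid.ofList w'), by
      rw [FreeMonoid.ofList_append, map_mul]; rfl⟩

/-- The word of `Φ^{p-1}(σ₁^{e_p}) ⋯ Φ(σ₁^{e_2}) σ₁^{e_1}` for `E = [e_p, …, e_1]`: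
as `Φ` swaps `σ₁` and `σ₂`, the block `σ^{e_r}` uses the letter `r - 1 mod 2`. -/
def flipPowWord : List ℕ → List (Fin 2)
  | [] => []
  | e :: t => List.replicate e (Fin.rev^[t.length] 0) ++ flipPowWord t

theorem mk_flipPowWord (E : List ℕ) :
    (braidCon 2).mk' (FreeMonoid.ofList (flipPowWord E)) =
      prodFlip (flipH 2) (E.map (sigma 0 ^ ·)) := by
  induction E with
  | nil => rfl
  | cons e t ih =>
    rw [flipPowWord, FreeMonoid.ofList_append, map_mul, ih, ← sigma_pow, List.map_cons,
      prodFlip, List.length_map, iterate_map_pow, iterate_flipH_sigma]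

theorem noAlternatingTriple_flipPowWord : ∀ {E : List ℕ},
    (∀ i (h : i < E.length), 1 ≤ i → i + 2 ≤ E.length → 2 ≤ E[i]) →
      NoAlternatingTriple (flipPowWord E)
  | [], _ => by simp [NoAlternatingTriple, flipPowWord]
  | e :: t, h => by
    refine .replicate_append e (noAlternatingTriple_flipPowWord fun i hi h1 h2 => ?_) ?_
    · have := h (i + 1) (by simp; omega) (by omega) (by simp; omega)
      rwa [List.getElem_cons_succ] at this
    · intro y hy
      match t, h, hy with
      | [], _, hy => simp [flipPowWord] at hy
      | [e₁], _, hy =>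
        have := hy.subset (List.mem_cons_of_mem _ (List.mem_singleton_self _))
        simp [flipPowWord] at this
      | e₁ :: e₂ :: t, h, hy =>
        obtain ⟨k, hk⟩ : ∃ k, e₁ = k + 2 := ⟨e₁ - 2, by have := h 1; simp at this; omega⟩
        rw [flipPowWord, hk, List.replicate_succ, List.replicate_succ, List.cons_append,
          List.cons_append, List.cons_prefix_cons, List.cons_prefix_cons] at hy
        exact hy.1.trans hy.2.1.symm

theorem getLast?_flipPowWord : ∀ {E : List ℕ} {e : ℕ}, E.getLast? = some e → e ≠ 0 →
    (flipPowWord E).getLast? = some 0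
  | [], _, h, _ => by simp at h
  | [_], _, h, he => by
    simp only [List.getLast?_singleton, Option.some.injEq] at h
    subst h
    simp [flipPowWord, List.getLast?_replicate, he]
  | _ :: b :: t, _, h, he => by
    rw [flipPowWord, List.getLast?_append,
      getLast?_flipPowWord (E := b :: t) (by simpa using h) he]
    rfl

theorem rightDescents_prodFlip_map_pow {D : List ℕ} {e : ℕ} (hlast : D.getLast? = some e)
    (he : e ≠ 0) (hinner : ∀ i (h : i < D.length), 1 ≤ i → i + 2 ≤ D.length → 2 ≤ D[i]) :
    rightDescents (prodFlip (flipH 2) (D.map (sigma 0 ^ ·))) = {0} := by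
  rw [← mk_flipPowWord]
  exact rightDescents_mk_eq_singleton (noAlternatingTriple_flipPowWord hinner)
    (getLast?_flipPowWord hlast he)

def prefixProd (E : List ℕ) (j : ℕ) : PosBraid 2 :=
  prodFlip (flipH 2) ((E.take j).map (sigma 0 ^ ·))

theorem prefixProd_succ (E : List ℕ) {j : ℕ} (hj : j < E.length) :
    prefixProd E (j + 1) = flipH 2 (prefixProd E j) * sigma 0 ^ E[j] := by
  rw [prefixProd, List.take_succ_eq_append_getElem hj, List.map_append, List.map_singleton,
    prodFlip_append_singleton, prefixProd]

theorem isSplit_map_pow_iff (x : PosBraid 2) (E : List ℕ) :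
    IsSplit x (E.map (sigma (0 : Fin 1) ^ ·)) ↔
      x = prefixProd E E.length ∧ (∀ h : 0 < E.length, E[0] ≠ 0) ∧
        ∀ j, 1 ≤ j → j < E.length → rightDescents (prefixProd E j) = {0} := by
  have hincl : ∀ j, ((E.map (sigma (0 : Fin 1) ^ ·)).take j).map (incl 1) =
      (E.take j).map (sigma 0 ^ ·) := by
    intro j
    simp only [← List.map_take, List.map_map, Function.comp_def, map_pow, incl_sigma]
    rfl
  have hhead : (E.map (sigma (0 : Fin 1) ^ ·)).head? ≠ some 1 ↔
      ∀ h : 0 < E.length, E[0] ≠ 0 := by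
    cases E <;> simp [sigma_pow_eq_one_iff]
  refine and_congr ?_ (and_congr hhead ?_)
  · rw [prefixProd, ← hincl, List.take_of_length_le (by simp)]
  · rw [List.length_map]
    refine forall₃_congr fun j _ _ => ?_
    rw [hincl, Set.eq_singleton_iff_unique_mem]
    rfl

theorem rightDescents_prefixProd {E : List ℕ} {j : ℕ} (hj : 1 ≤ j) (hjE : j ≤ E.length)
    (hlast : 1 ≤ E[j - 1]) (hinner : ∀ i (hi : i < E.length), 1 ≤ i → i + 2 ≤ j → 2 ≤ E[i]) :
    rightDescents (prefixProd E j) = {0} := by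
  refine rightDescents_prodFlip_map_pow (e := E[j - 1]) ?_ (by omega) fun i hi h1 h2 => ?_
  · rw [List.getLast?_take, if_neg (by omega), List.getElem?_eq_getElem (by omega)]
    rfl
  · rw [List.length_take] at hi h2
    rw [List.getElem_take]
    exact hinner i (by omega) h1 (by omega)

theorem flipH_sigma_zero : flipH 2 (sigma 0) = sigma 1 := rfl

theorem flipH_sigma_one : flipH 2 (sigma 1) = sigma 0 := rfl

theorem sigma_braid : sigma (0 : Fin 2) * sigma 1 * sigma 0 = sigma 1 * sigma 0 * sigma 1 :=
  (Con.eq _).2 <| ConGen.Rel.of _ _ <| .inr ⟨0, 1, .inl rfl, rfl, rfl⟩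

theorem sigma_mul_sigma_mul_pow (b : ℕ) :
    sigma (0 : Fin 2) * sigma 1 * sigma 0 ^ b = sigma 1 ^ b * sigma 0 * sigma 1 := by
  induction b with
  | zero => simp
  | succ b ih =>
    rw [pow_succ, ← mul_assoc, ih, pow_succ, mul_assoc _ (sigma 0), mul_assoc _ (sigma 0),
      mul_assoc (sigma 1 ^ b), sigma_braid]
    simp only [mul_assoc]

theorem one_mem_rightDescents_flipH {y : PosBraid 2} (h : 0 ∈ rightDescents y) :
    1 ∈ rightDescents (flipH 2 y) := by
  obtain ⟨z, rfl⟩ := h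
  exact ⟨flipH 2 z, by rw [map_mul, flipH_sigma_zero]⟩

theorem one_mem_rightDescents_flipH_flipH {y : PosBraid 2} (h : 0 ∈ rightDescents y) (b : ℕ) :
    1 ∈ rightDescents (flipH 2 (flipH 2 y * sigma 0) * sigma 0 ^ b) := by
  obtain ⟨z, rfl⟩ := h
  refine ⟨flipH 2 (flipH 2 z) * sigma 1 ^ b * sigma 0, ?_⟩
  simp only [map_mul, flipH_sigma_zero, flipH_sigma_one, mul_assoc]
  rw [← mul_assoc (sigma 0) (sigma 1), sigma_mul_sigma_mul_pow]
  simp only [mul_assoc]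

theorem one_le_getElem_of_rightDescents {E : List ℕ}
    (hE : ∀ j, 1 ≤ j → j < E.length → rightDescents (prefixProd E j) = {0})
    {i : ℕ} (hi : 1 ≤ i) (hlen : i + 2 ≤ E.length) : 1 ≤ E[i] := by
  by_contra! h0
  have hmem : 1 ∈ rightDescents (prefixProd E (i + 1)) := by
    rw [prefixProd_succ E (by omega), Nat.lt_one_iff.1 h0, pow_zero, mul_one]
    exact one_mem_rightDescents_flipH (by rw [hE i hi (by omega)]; rfl)
  rw [hE (i + 1) (by omega) (by omega)] at hmem
  exact absurd hmem (by decide)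

theorem two_le_getElem_of_rightDescents {E : List ℕ}
    (hE : ∀ j, 1 ≤ j → j < E.length → rightDescents (prefixProd E j) = {0})
    {i : ℕ} (hi : 1 ≤ i) (hlen : i + 3 ≤ E.length) : 2 ≤ E[i] := by
  have h1 := one_le_getElem_of_rightDescents hE hi (by omega)
  by_contra! h2
  have hmem : 1 ∈ rightDescents (prefixProd E (i + 2)) := by
    rw [prefixProd_succ E (j := i + 1) (by omega), prefixProd_succ E (by omega),
      show E[i] = 1 by omega, pow_one]
    exact one_mem_rightDescents_flipH_flipH (by rw [hE i hi (by omega)]; rfl) _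
  rw [hE (i + 2) (by omega) (by omega)] at hmem
  exact absurd hmem (by decide)

theorem three_splitting_characterization_general (E : List ℕ) :
    (∃ x : PosBraid 2, IsSplit x (E.map (fun e => sigma (0 : Fin 1) ^ e))) ↔
      ∀ (i : ℕ) (hi : i < E.length),
        (i = 0 → 1 ≤ E[i]'hi) ∧
        (1 ≤ i → i + 3 ≤ E.length → 2 ≤ E[i]'hi) ∧
        (3 ≤ E.length → i + 2 = E.length → 1 ≤ E[i]'hi) := by
  simp only [isSplit_map_pow_iff, exists_eq_left]
  constructor
  · rintro ⟨hhead, hdesc⟩ i hi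
    refine ⟨?_, two_le_getElem_of_rightDescents hdesc, fun _ hi2 =>
      one_le_getElem_of_rightDescents hdesc (by omega) (by omega)⟩
    rintro rfl
    exact Nat.one_le_iff_ne_zero.2 (hhead hi)
  · intro h
    refine ⟨fun h0 => Nat.one_le_iff_ne_zero.1 ((h 0 h0).1 rfl),
      fun j hj hjE => rightDescents_prefixProd hj hjE.le ?_
        fun i hi h1 h2 => (h i hi).2.1 h1 (by omega)⟩
    rcases (show j - 1 = 0 ∨ (1 ≤ j - 1 ∧ j - 1 + 3 ≤ E.length) ∨
        (3 ≤ E.length ∧ j - 1 + 2 = E.length) by omega) with h0 | ⟨h1, h3⟩ | ⟨h3, h2⟩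
    · exact (h _ _).1 h0
    · exact le_trans (by norm_num) ((h _ _).2.1 h1 h3)
    · exact (h _ _).2.2 h3 h2

/-- a sequence `(σ_1^{e_p}, …, σ_1^{e_1})` of powers of `σ_1` is the
`3`-splitting of some positive `3`-strand braid if and only if `e_p ≥ 1`, `e_r ≥ 2`
for `p > r ≥ 3`, and `e_2 ≥ 1` whenever `p ≥ 3`.  (Here `B_3⁺ = PosBraid 2` and the
exponent list `E = [e_p, …, e_1]` is written from the left.) -/
theorem three_splitting_characterization (E : List ℕ) (hE : E ≠ []) :
    (∃ x : PosBraid 2, IsSplit x (E.map (fun e => sigma (0 : Fin 1) ^ e))) ↔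
      ∀ (i : ℕ) (hi : i < E.length),
        (i = 0 → 1 ≤ E[i]'hi) ∧
        (1 ≤ i → i + 3 ≤ E.length → 2 ≤ E[i]'hi) ∧
        (3 ≤ E.length → i + 2 = E.length → 1 ≤ E[i]'hi) :=
  three_splitting_characterization_general E
end

section
/- In B₃⁺, if e_r = 1 for some r with p > r ≥ 3 appears in a prospective alternating decomposition, the decomposition fails: concretely, for any a, b ≥ 0, the braid σ₁^{a+1}σ₂σ₁^{b+1} equals σ₁^a σ₂^{b+1} σ₁ σ₂ in B₃⁺; in particular σ₁^{a+1}σ₂σ₁^{b+1} is right-divisible by σ₂. -/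
/-! The braid relation `σ₁σ₂σ₁ = σ₂σ₁σ₂` says that `σ₁σ₂` conjugates `σ₁` to `σ₂`, hence
`σ₁^n` to `σ₂^n`; so `σ₁^{a+1} σ₂ σ₁^n = σ₁^a (σ₁σ₂) σ₁^n = σ₁^a σ₂^n (σ₁σ₂)`. -/

theorem sigma_mul_sigma_mul_sigma {N : ℕ} {i j : Fin N} (hij : (i : ℕ) + 1 = j) :
    sigma i * sigma j * sigma i = sigma j * sigma i * sigma j :=
  (Con.eq _).mpr (ConGen.Rel.of _ _ (Or.inr ⟨i, j, Or.inl hij, rfl, rfl⟩))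

theorem pow_succ_mul_mul_pow_of_braid {M : Type*} [Monoid M] {x y : M}
    (h : x * y * x = y * x * y) (a n : ℕ) :
    x ^ (a + 1) * y * x ^ n = x ^ a * y ^ n * x * y := by
  have hsemiconj : SemiconjBy (x * y) (x ^ n) (y ^ n) :=
    SemiconjBy.pow_right (by rw [SemiconjBy, h, mul_assoc]) n
  rw [pow_succ, mul_assoc _ x, mul_assoc, hsemiconj.eq]
  simp only [mul_assoc]

/-- in `B_3⁺`, for any `a, b ≥ 0`,
`σ_1^{a+1} σ_2 σ_1^{b+1} = σ_1^a σ_2^{b+1} σ_1 σ_2`; in particular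
`σ_1^{a+1} σ_2 σ_1^{b+1}` is right-divisible by `σ_2`. -/
theorem sigma_pow_identity (a b : ℕ) :
    sigma (0 : Fin 2) ^ (a + 1) * sigma (1 : Fin 2) * sigma (0 : Fin 2) ^ (b + 1) =
      sigma (0 : Fin 2) ^ a * sigma (1 : Fin 2) ^ (b + 1) * sigma (0 : Fin 2) *
        sigma (1 : Fin 2) ∧
    ∃ z : PosBraid 2,
      sigma (0 : Fin 2) ^ (a + 1) * sigma (1 : Fin 2) * sigma (0 : Fin 2) ^ (b + 1) =
        z * sigma (1 : Fin 2) := by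
  have key := pow_succ_mul_mul_pow_of_braid
    (sigma_mul_sigma_mul_sigma (i := (0 : Fin 2)) (j := 1) rfl) a (b + 1)
  exact ⟨key, _, key⟩
end
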